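/- arXiv:1410.3046 — 2 statements merged into one kernel-verified Lean document; each statement's English description precedes it below -/
import Mathlib

section
/- Let D be a pretriangulated category, and let X → Y → Z → X[1] and X' → Y' → Z' → X'[1] be two distinguished triangles. Assume that the natural maps Hom(X, X') → Hom(X, Y') and Hom(Z, Z') → Hom(Y, Z') (given by composition with X' → Y' and precomposition with Y → Z respectively) are bijective. Then any morphism f : Y → Y' extends uniquely to a morphism of triangles (g, f, h). -/
open CategoryTheory Pretriangulated

/-- In a pretriangulated category, given two distinguished triangles such that
composition with `T'.mor₁` gives a bijection `Hom(X, X') → Hom(X, Y')` and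
precomposition with `T.mor₂` gives a bijection `Hom(Z, Z') → Hom(Y, Z')`,
any morphism `f : Y ⟶ Y'` extends uniquely to a morphism of triangles. -/
theorem stmt0 {C : Type*} [Category C] [Limits.HasZeroObject C] [Preadditive C]
    [HasShift C ℤ] [∀ n : ℤ, (shiftFunctor C n).Additive] [Pretriangulated C]
    (T T' : Triangle C) (hT : T ∈ distTriang C) (hT' : T' ∈ distTriang C)
    (h1 : Function.Bijective (fun g : T.obj₁ ⟶ T'.obj₁ => g ≫ T'.mor₁))
    (h2 : Function.Bijective (fun h : T.obj₃ ⟶ T'.obj₃ => T.mor₂ ≫ h))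
    (f : T.obj₂ ⟶ T'.obj₂) :
    ∃! gh : (T.obj₁ ⟶ T'.obj₁) × (T.obj₃ ⟶ T'.obj₃),
      T.mor₁ ≫ f = gh.1 ≫ T'.mor₁ ∧
      T.mor₂ ≫ gh.2 = f ≫ T'.mor₂ ∧
      T.mor₃ ≫ gh.1⟦(1 : ℤ)⟧' = gh.2 ≫ T'.mor₃ := by
  obtain ⟨g, hg⟩ := h1.2 (T.mor₁ ≫ f)
  dsimp at hg
  obtain ⟨h, hh1, hh2⟩ := complete_distinguished_triangle_morphism T T' hT hT' g f hg.symm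
  refine ⟨⟨g, h⟩, ⟨hg.symm, hh1, hh2⟩, ?_⟩
  rintro ⟨g', h'⟩ ⟨c1, c2, c3⟩
  have eg : g' = g := h1.1 (by dsimp; rw [← c1, hg])
  have eh : h' = h := h2.1 (by dsimp; rw [c2, hh1])
  simp [eg, eh]
end

section
/- Let Λ be a directed preordered set and let M be the set of all finite subsets Λ' ⊆ Λ which possess a greatest element, ordered by inclusion. Then M is a directed partially ordered set which is cofinite (each element of M has only finitely many elements below it), and the map M → Λ sending Λ' to its greatest element max(Λ') is monotone and cofinal (for every λ ∈ Λ there exists Λ' ∈ M with λ ≤ max(Λ')). -/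
/-- Let `Λ` be a directed preordered set and `M` the collection of finite subsets of `Λ`
possessing a greatest element, ordered by inclusion.  Then `M` is a partially ordered set
(inclusion is antisymmetric), `M` is directed, `M` is cofinite (each element has only
finitely many elements below it), and any map `M → Λ` sending each finite subset to a
greatest element of it is monotone and cofinal. -/
theorem stmt2 {Λ : Type*} [Preorder Λ] [IsDirected Λ (· ≤ ·)] :
    (∀ s t : {s : Finset Λ // ∃ a ∈ s, ∀ b ∈ s, b ≤ a},
        s.1 ⊆ t.1 → t.1 ⊆ s.1 → s = t) ∧
    (∀ s t : {s : Finset Λ // ∃ a ∈ s, ∀ b ∈ s, b ≤ a},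
        ∃ u : {s : Finset Λ // ∃ a ∈ s, ∀ b ∈ s, b ≤ a}, s.1 ⊆ u.1 ∧ t.1 ⊆ u.1) ∧
    (∀ s : {s : Finset Λ // ∃ a ∈ s, ∀ b ∈ s, b ≤ a},
        {t : {s : Finset Λ // ∃ a ∈ s, ∀ b ∈ s, b ≤ a} | t.1 ⊆ s.1}.Finite) ∧
    (∀ f : {s : Finset Λ // ∃ a ∈ s, ∀ b ∈ s, b ≤ a} → Λ,
        (∀ s, f s ∈ s.1 ∧ ∀ b ∈ s.1, b ≤ f s) →
        (∀ s t, s.1 ⊆ t.1 → f s ≤ f t) ∧ (∀ l : Λ, ∃ s, l ≤ f s)) := by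
  classical
  refine ⟨fun s t hst hts => Subtype.ext (subset_antisymm hst hts), ?_, ?_, ?_⟩
  · rintro ⟨s, a, has, ha⟩ ⟨t, b, hbt, hb⟩
    obtain ⟨c, hac, hbc⟩ := directed_of (· ≤ ·) a b
    refine ⟨⟨insert c (s ∪ t), c, Finset.mem_insert_self _ _, ?_⟩, ?_, ?_⟩
    · intro x hx
      rcases Finset.mem_insert.1 hx with rfl | hx
      · exact le_refl _
      · rcases Finset.mem_union.1 hx with h | h
        · exact (ha x h).trans hac
        · exact (hb x h).trans hbc
    · exact fun x hx => Finset.mem_insert_of_mem (Finset.mem_union_left _ hx)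
    · exact fun x hx => Finset.mem_insert_of_mem (Finset.mem_union_right _ hx)
  · intro s
    have : {t : {s : Finset Λ // ∃ a ∈ s, ∀ b ∈ s, b ≤ a} | t.1 ⊆ s.1} ⊆
        Subtype.val ⁻¹' ↑(s.1.powerset) := by
      intro t ht
      simpa [Finset.mem_powerset] using ht
    exact Set.Finite.subset ((s.1.powerset.finite_toSet).preimage
      (Subtype.val_injective.injOn)) this
  · intro f hf
    refine ⟨fun s t hst => (hf t).2 (f s) (hst (hf s).1), fun l => ?_⟩
    refine ⟨⟨{l}, l, Finset.mem_singleton_self l, fun b hb => le_of_eq (Finset.mem_singleton.1 hb)⟩, ?_⟩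
    exact (hf _).2 l (Finset.mem_singleton_self l)
end
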